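/- Define operators on L²(ℝ²ⁿ): for a Schwartz function f(x,y,r) and fixed r, r' ∈ ℝ, let (π_r ⊠ π_{r'})(f)ξ(u,v) = ∫ f(x,y,r+r') ē(η_λ(r)β(u, e^{λr'}y)) ē(η_λ(r')β(v,y)) ξ(u+e^{λr'}x, v+x) dx dy and (π_{r'} ⊠ π_r)(f)ξ(v,u) = ∫ f(x,y,r+r') ē(η_λ(r')β(v, e^{λr}y)) ē(η_λ(r)β(u,y)) ξ(v+e^{λr}x, u+x) dx dy. Then the unitary T: L²(ℝ²ⁿ) → L²(ℝ²ⁿ), Tξ(v,u) = e^{-nλr/2}e^{-nλr'/2} ξ(e^{-λr'}u + (e^{λr'}-e^{-λr'})e^{-λr}v, e^{-λr}v), satisfies T∘(π_r⊠π_{r'})(f) = (π_{r'}⊠π_r)(f)∘T for every Schwartz f. -/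

import Mathlib

/-!
`T` is composition with the linear map `A(v, u) = (e^{-λr'}u + (e^{λr'} - e^{-λr'})e^{-λr}v, e^{-λr}v)`
(times a constant), and `A(e^{λr}x, x) = (e^{λr'}x, x)`, so `A` carries the translation by
`(e^{λr}x, x)` occurring in `(π_{r'} ⊠ π_r)(f)` to the translation by `(e^{λr'}x, x)` occurring in
`(π_r ⊠ π_{r'})(f)`. After this substitution the two phases agree because
`η_λ(r)(e^{2λr'} - 1) = (e^{2λr} - 1)(e^{2λr'} - 1)/(2λ)` is symmetric in `r` and `r'`.
Hence the two sides agree integrand by integrand, at every point.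
-/

open MeasureTheory

noncomputable section

/-- The standard inner product on `ℝⁿ`. -/
def beta {n : ℕ} (x y : Fin n → ℝ) : ℝ := ∑ i, x i * y i

/-- `ē(t) = e^{-2πit}`. -/
def ebar (t : ℝ) : ℂ := Complex.exp (-(2 * Real.pi * t) * Complex.I)

/-- `η_λ(r) = (e^{2λr}-1)/(2λ)`. -/
def eta (l r : ℝ) : ℝ := (Real.exp (2 * l * r) - 1) / (2 * l)

/-- The inner tensor product representation `(π_r ⊠ π_{r'})(f)` on `L²(ℝ²ⁿ)`;
the argument `p = (u,v)`:
`(π_r ⊠ π_{r'})(f)ξ(u,v) = ∫ f(x,y,r+r') ē(η_λ(r)β(u, e^{λr'}y))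
  ē(η_λ(r')β(v,y)) ξ(u+e^{λr'}x, v+x) dx dy`. -/
def piBox {n : ℕ} (l r r' : ℝ)
    (f : SchwartzMap ((Fin n → ℝ) × (Fin n → ℝ) × ℝ) ℂ)
    (ξ : (Fin n → ℝ) × (Fin n → ℝ) → ℂ) :
    (Fin n → ℝ) × (Fin n → ℝ) → ℂ :=
  fun p => ∫ x : Fin n → ℝ, ∫ y : Fin n → ℝ,
    f (x, y, r + r') * ebar (eta l r * beta p.1 (Real.exp (l * r') • y)) *
      ebar (eta l r' * beta p.2 y) *
      ξ (p.1 + Real.exp (l * r') • x, p.2 + x)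

/-- The intertwining unitary `T : L²(ℝ²ⁿ) → L²(ℝ²ⁿ)`; the argument `p = (v,u)`:
`Tξ(v,u) = e^{-nλr/2}e^{-nλr'/2}
  ξ(e^{-λr'}u + (e^{λr'}-e^{-λr'})e^{-λr}v, e^{-λr}v)`. -/
def Tint {n : ℕ} (l r r' : ℝ) (ξ : (Fin n → ℝ) × (Fin n → ℝ) → ℂ) :
    (Fin n → ℝ) × (Fin n → ℝ) → ℂ :=
  fun p => (Real.exp (-((n : ℝ) * (l * r)) / 2) *
      Real.exp (-((n : ℝ) * (l * r')) / 2) : ℝ) *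
    ξ (Real.exp (-(l * r')) • p.2 +
        ((Real.exp (l * r') - Real.exp (-(l * r'))) * Real.exp (-(l * r))) • p.1,
      Real.exp (-(l * r)) • p.1)

open Real

def tintMap {n : ℕ} (l r r' : ℝ) (p : (Fin n → ℝ) × (Fin n → ℝ)) : (Fin n → ℝ) × (Fin n → ℝ) :=
  (exp (-(l * r')) • p.2 + ((exp (l * r') - exp (-(l * r'))) * exp (-(l * r))) • p.1,
    exp (-(l * r)) • p.1)

lemma Tint_apply {n : ℕ} (l r r' : ℝ) (ξ : (Fin n → ℝ) × (Fin n → ℝ) → ℂ)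
    (p : (Fin n → ℝ) × (Fin n → ℝ)) :
    Tint l r r' ξ p =
      ((exp (-((n : ℝ) * (l * r)) / 2) * exp (-((n : ℝ) * (l * r')) / 2) : ℝ) : ℂ) *
        ξ (tintMap l r r' p) :=
  rfl

lemma beta_eq_dotProduct {n : ℕ} (x y : Fin n → ℝ) : beta x y = x ⬝ᵥ y := rfl

lemma ebar_add (s t : ℝ) : ebar (s + t) = ebar s * ebar t := by
  rw [ebar, ebar, ebar, ← Complex.exp_add]
  push_cast
  ring_nf

lemma eta_mul_exp_sub_one_comm (l r r' : ℝ) :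
    eta l r * (exp (2 * l * r') - 1) = eta l r' * (exp (2 * l * r) - 1) := by
  unfold eta
  ring

lemma tintMap_add_translate {n : ℕ} (l r r' : ℝ) (p : (Fin n → ℝ) × (Fin n → ℝ))
    (x : Fin n → ℝ) :
    tintMap l r r' (p.1 + exp (l * r) • x, p.2 + x) =
      ((tintMap l r r' p).1 + exp (l * r') • x, (tintMap l r r' p).2 + x) := by
  ext i <;> simp only [tintMap, Pi.add_apply, Pi.smul_apply, smul_eq_mul, exp_neg]
  · field_simp
    ring
  · field_simp

lemma phase_tintMap {n : ℕ} (l r r' : ℝ) (p : (Fin n → ℝ) × (Fin n → ℝ)) (y : Fin n → ℝ) :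
    eta l r * beta (tintMap l r r' p).1 (exp (l * r') • y) +
        eta l r' * beta (tintMap l r r' p).2 y =
      eta l r' * beta p.1 (exp (l * r) • y) + eta l r * beta p.2 y := by
  have h2 (s : ℝ) : exp (2 * l * s) = exp (l * s) * exp (l * s) := by
    rw [← exp_add]; ring_nf
  have hsym := eta_mul_exp_sub_one_comm l r r'
  simp only [tintMap, beta_eq_dotProduct, add_dotProduct, smul_dotProduct, dotProduct_smul,
    smul_eq_mul, exp_neg, h2] at hsym ⊢
  field_simp
  linear_combination (p.1 ⬝ᵥ y) * hsym

lemma ebar_phase_tintMap {n : ℕ} (l r r' : ℝ) (p : (Fin n → ℝ) × (Fin n → ℝ))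
    (y : Fin n → ℝ) :
    ebar (eta l r * beta (tintMap l r r' p).1 (exp (l * r') • y)) *
        ebar (eta l r' * beta (tintMap l r r' p).2 y) =
      ebar (eta l r' * beta p.1 (exp (l * r) • y)) * ebar (eta l r * beta p.2 y) := by
  rw [← ebar_add, ← ebar_add, phase_tintMap]

lemma Tint_piBox {n : ℕ} (l r r' : ℝ)
    (f : SchwartzMap ((Fin n → ℝ) × (Fin n → ℝ) × ℝ) ℂ)
    (ξ : (Fin n → ℝ) × (Fin n → ℝ) → ℂ) :
    Tint l r r' (piBox l r r' f ξ) = piBox l r' r f (Tint l r r' ξ) := by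
  funext p
  simp only [Tint_apply, piBox, ← integral_const_mul]
  congr 1; funext x
  congr 1; funext y
  rw [tintMap_add_translate, add_comm r' r]
  linear_combination (_ * f (x, y, r + r') * ξ _) * ebar_phase_tintMap l r r' p y

theorem stmt_17_general {n : ℕ} (l : ℝ) (r r' : ℝ)
    (f : SchwartzMap ((Fin n → ℝ) × (Fin n → ℝ) × ℝ) ℂ)
    (ξ : (Fin n → ℝ) × (Fin n → ℝ) → ℂ) :
    ∀ᵐ p ∂(volume : Measure ((Fin n → ℝ) × (Fin n → ℝ))),
      Tint l r r' (piBox l r r' f ξ) p = piBox l r' r f (Tint l r r' ξ) p :=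
  Filter.Eventually.of_forall (congrFun (Tint_piBox l r r' f ξ))

/-- `T` intertwines the inner tensor products: for every Schwartz `f` and
`ξ ∈ L²(ℝ²ⁿ)` one has `T∘(π_r⊠π_{r'})(f)ξ = (π_{r'}⊠π_r)(f)(Tξ)` (as elements
of `L²`, i.e. almost everywhere).  Note that `(π_{r'}⊠π_r)(f)` is `piBox` with
the roles of `r` and `r'` interchanged. -/
theorem stmt_17 {n : ℕ} (l : ℝ) (hl : l ≠ 0) (r r' : ℝ)
    (f : SchwartzMap ((Fin n → ℝ) × (Fin n → ℝ) × ℝ) ℂ)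
    (ξ : (Fin n → ℝ) × (Fin n → ℝ) → ℂ)
    (hξ : MemLp ξ 2 (volume : Measure ((Fin n → ℝ) × (Fin n → ℝ)))) :
    ∀ᵐ p ∂(volume : Measure ((Fin n → ℝ) × (Fin n → ℝ))),
      Tint l r r' (piBox l r r' f ξ) p = piBox l r' r f (Tint l r r' ξ) p :=
  stmt_17_general l r r' f ξ
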